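/- arXiv:1505.07619 — 3 statements merged into one kernel-verified Lean document; each statement's English description precedes it below -/
import Mathlib

section
/- Let n ≥ 3 and let α_i = e_i − e_{i+1} be any simple root of A_{n−1} (1 ≤ i ≤ n−1). Then there is no permutation w ∈ S_n such that w·(−2α_i) = w(−2α_i + ρ) − ρ is dominant. -/
/-- ρ = (n−1, n−2, …, 1, 0) for type A_{n−1} realized in ℤ^n. -/
def weylRho (n : ℕ) : Fin n → ℤ := fun i => (n : ℤ) - 1 - (i : ℕ)

/-- The action of `w ∈ S_n` on weights: `w(λ)_i = λ_{w⁻¹(i)}`. -/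
def wAct {n : ℕ} (w : Equiv.Perm (Fin n)) (lam : Fin n → ℤ) : Fin n → ℤ :=
  fun i => lam (w⁻¹ i)

/-- The dot action `w·λ = w(λ+ρ) − ρ`. -/
def dotAct {n : ℕ} (w : Equiv.Perm (Fin n)) (lam : Fin n → ℤ) : Fin n → ℤ :=
  fun i => lam (w⁻¹ i) + weylRho n (w⁻¹ i) - weylRho n i

/-- `λ` is dominant iff `λ_1 ≥ λ_2 ≥ ⋯ ≥ λ_n`. -/
def IsDominant {n : ℕ} (lam : Fin n → ℤ) : Prop :=
  ∀ i j : Fin n, i ≤ j → lam j ≤ lam i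

/-- The root `e_i − e_j`. -/
def posRoot {n : ℕ} (i j : Fin n) : Fin n → ℤ :=
  fun k => (if k = i then 1 else 0) - (if k = j then 1 else 0)

/-- Positive roots of A_{n−1}: `e_i − e_j` with `i < j`. -/
def IsPosRoot {n : ℕ} (x : Fin n → ℤ) : Prop :=
  ∃ i j : Fin n, i < j ∧ x = posRoot i j

/-- Negative roots of A_{n−1}. -/
def IsNegRoot {n : ℕ} (x : Fin n → ℤ) : Prop :=
  ∃ i j : Fin n, i < j ∧ x = -(posRoot i j)

/-- The length ℓ(w): the number of positive roots sent to negative roots by `w`,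
i.e. the number of inversions of `w`. -/
def weylLen {n : ℕ} (w : Equiv.Perm (Fin n)) : ℕ :=
  (Finset.univ.filter (fun p : Fin n × Fin n => p.1 < p.2 ∧ w p.2 < w p.1)).card


/-!
Since `w·λ + ρ = w(λ + ρ)` and `ρ` is strictly decreasing, `w·λ` can only be dominant when
`w(λ + ρ)` is strictly decreasing, so `λ + ρ` must have pairwise distinct entries. For
`λ = −2α_i` this fails: the entry `2` at position `i + 1` (resp. `−2` at position `i = 0`)
exactly compensates the drop of `ρ` over two steps, so `λ + ρ` takes the same value at
positions `i + 1` and `i − 1` (resp. at `0` and `2`, which needs `n ≥ 3`).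
-/

theorem isDominant_iff_antitone {n : ℕ} (lam : Fin n → ℤ) : IsDominant lam ↔ Antitone lam :=
  Iff.rfl

theorem weylRho_strictAnti (n : ℕ) : StrictAnti (weylRho n) := by
  intro j k hjk
  have : (j : ℕ) < k := hjk
  simp only [weylRho]
  omega

theorem dotAct_add_weylRho {n : ℕ} (w : Equiv.Perm (Fin n)) (lam : Fin n → ℤ) :
    dotAct w lam + weylRho n = wAct w (lam + weylRho n) := by
  ext k
  simp only [dotAct, wAct, Pi.add_apply]
  ring

theorem IsDominant.injective_add_weylRho {n : ℕ} {w : Equiv.Perm (Fin n)} {lam : Fin n → ℤ}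
    (h : IsDominant (dotAct w lam)) : Function.Injective (lam + weylRho n) := by
  have hanti : StrictAnti (wAct w (lam + weylRho n)) := by
    rw [← dotAct_add_weylRho]
    exact ((isDominant_iff_antitone _).mp h).add_strictAnti (weylRho_strictAnti n)
  intro j k hjk
  exact w.injective (hanti.injective (by simpa [wAct] using hjk))

section NegTwoPosRoot

variable {n : ℕ} {j k m : Fin n}

theorem neg_two_smul_posRoot_add_weylRho_apply_left (h : j ≠ k) :
    (-(2 • posRoot j k) + weylRho n) j = weylRho n j - 2 := by
  simp only [nsmul_eq_mul, Nat.cast_ofNat, Pi.add_apply, Pi.neg_apply, Pi.mul_apply,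
    Pi.ofNat_apply, posRoot, h, ↓reduceIte]
  ring

theorem neg_two_smul_posRoot_add_weylRho_apply_right (h : j ≠ k) :
    (-(2 • posRoot j k) + weylRho n) k = weylRho n k + 2 := by
  simp only [nsmul_eq_mul, Nat.cast_ofNat, Pi.add_apply, Pi.neg_apply, Pi.mul_apply,
    Pi.ofNat_apply, posRoot, h.symm, ↓reduceIte]
  ring

theorem neg_two_smul_posRoot_add_weylRho_apply_of_ne (hj : m ≠ j) (hk : m ≠ k) :
    (-(2 • posRoot j k) + weylRho n) m = weylRho n m := by
  simp [posRoot, hj, hk]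

end NegTwoPosRoot

theorem not_injective_neg_two_smul_simpleRoot_add_weylRho {n : ℕ} (hn : 3 ≤ n) (i : ℕ)
    (hi : i + 1 < n) :
    ¬ Function.Injective
      (-(2 • posRoot (⟨i, Nat.lt_of_succ_lt hi⟩ : Fin n) (⟨i + 1, hi⟩ : Fin n)) + weylRho n) := by
  intro hinj
  rcases i with _ | i
  · refine absurd (@hinj ⟨0, by omega⟩ ⟨2, by omega⟩ ?_) (by simp)
    rw [neg_two_smul_posRoot_add_weylRho_apply_left (by simp),
      neg_two_smul_posRoot_add_weylRho_apply_of_ne (by simp) (by simp)]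
    simp only [weylRho]
    omega
  · refine absurd (@hinj ⟨i + 2, hi⟩ ⟨i, by omega⟩ ?_) (by simp)
    rw [neg_two_smul_posRoot_add_weylRho_apply_right (by simp),
      neg_two_smul_posRoot_add_weylRho_apply_of_ne (by simp)
        (Fin.ne_of_val_ne (by dsimp only; omega))]
    simp only [weylRho]
    omega

/-- For n ≥ 3 and a simple root α_i of A_{n−1}, no w ∈ S_n makes w·(−2α_i) dominant. -/
theorem no_dominant_dot_neg_two_simple (n : ℕ) (hn : 3 ≤ n) (i : ℕ) (hi : i + 1 < n) :
    ¬ ∃ w : Equiv.Perm (Fin n),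
        IsDominant (dotAct w (-(2 • posRoot (⟨i, by omega⟩ : Fin n) (⟨i + 1, hi⟩ : Fin n)))) := by
  rintro ⟨w, hdom⟩
  exact not_injective_neg_two_smul_simpleRoot_add_weylRho hn i hi hdom.injective_add_weylRho
end

section
/- Let n ≥ 3, let α, β be distinct positive roots of A_{n−1}, and let w ∈ S_n be such that w·(−2α−β) = w(−2α−β+ρ) − ρ is dominant and nonzero. Then w(α) = −α_0, where α_0 = e_1 − e_n is the highest root, w(β) is a negative root, ℓ(w) = 2, the set {γ positive : w⁻¹(γ) negative} equals {α_0, −w(β)}, and w·(−2α−β) = α_0. -/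
lemma dotAct_eq_wAct_sub {n : ℕ} (w : Equiv.Perm (Fin n)) (lam : Fin n → ℤ) :
    dotAct w lam = wAct w (lam + weylRho n) - weylRho n := rfl

lemma sum_wAct {n : ℕ} (w : Equiv.Perm (Fin n)) (lam : Fin n → ℤ) :
    ∑ i, wAct w lam i = ∑ i, lam i :=
  Equiv.sum_comp w⁻¹ lam

lemma sum_posRoot {n : ℕ} (i j : Fin n) : ∑ k, posRoot i j k = 0 := by
  simp [posRoot, Finset.sum_sub_distrib]

section DominantShift

variable {n : ℕ} {f : Fin n → ℤ}

lemma le_weylRho_of_lt (hdom : IsDominant (f - weylRho n)) (hlt : ∀ i, f i < n) (i : Fin n) :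
    f i ≤ weylRho n i := by
  have h := hdom ⟨0, i.pos⟩ i (Nat.zero_le _)
  have h0 := hlt ⟨0, i.pos⟩
  simp only [Pi.sub_apply, weylRho] at h ⊢
  omega

lemma weylRho_le_of_lt (hdom : IsDominant (f - weylRho n)) (hlt : ∀ i, -1 < f i) (i : Fin n) :
    weylRho n i ≤ f i := by
  have hi := i.isLt
  have h := hdom i ⟨n - 1, by omega⟩ (by change (i : ℕ) ≤ n - 1; omega)
  have hlast := hlt ⟨n - 1, by omega⟩
  simp only [Pi.sub_apply, weylRho] at h ⊢
  omega

lemma eq_weylRho_or_exists_eq_neg_one_and_exists_eq (hdom : IsDominant (f - weylRho n))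
    (hle : ∀ i, f i ≤ n) (hge : ∀ i, -1 ≤ f i) (hsum : ∑ i, f i = ∑ i, weylRho n i) :
    f = weylRho n ∨ (∃ p, f p = -1) ∧ ∃ q, f q = n := by
  refine or_iff_not_imp_left.2 fun hne => ⟨?_, ?_⟩
  · by_contra! hp
    have hge' (i : Fin n) : weylRho n i ≤ f i :=
      weylRho_le_of_lt hdom (fun i => lt_of_le_of_ne (hge i) (hp i).symm) i
    exact hne (funext fun i =>
      ((Finset.sum_eq_sum_iff_of_le fun i _ => hge' i).1 hsum.symm i (Finset.mem_univ _)).symm)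
  · by_contra! hq
    have hle' (i : Fin n) : f i ≤ weylRho n i :=
      le_weylRho_of_lt hdom (fun i => lt_of_le_of_ne (hle i) (hq i)) i
    exact hne (funext fun i =>
      (Finset.sum_eq_sum_iff_of_le fun i _ => hle' i).1 hsum i (Finset.mem_univ _))

end DominantShift

section ShiftedWeight

variable {n : ℕ} {a b c d : Fin n}

lemma neg_two_smul_sub_add_weylRho_apply (k : Fin n) :
    (-(2 • posRoot a b) - posRoot c d + weylRho n) k = (n : ℤ) - 1 - (k : ℕ)
      - 2 * ((if (k : ℕ) = a then 1 else 0) - (if (k : ℕ) = b then 1 else 0))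
      - ((if (k : ℕ) = c then 1 else 0) - (if (k : ℕ) = d then 1 else 0)) := by
  simp only [posRoot, weylRho, Pi.add_apply, Pi.sub_apply, Pi.neg_apply, Pi.smul_apply,
    Fin.ext_iff]
  ring

lemma val_ne_or_val_ne_of_posRoot_ne (hne : posRoot a b ≠ posRoot c d) :
    ¬((a : ℕ) = c ∧ (b : ℕ) = d) :=
  fun ⟨h₁, h₂⟩ => hne (by rw [Fin.ext h₁, Fin.ext h₂])

lemma neg_one_le_neg_two_smul_sub_add_weylRho (hab : a < b) (hcd : c < d)
    (hne : posRoot a b ≠ posRoot c d) (k : Fin n) :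
    -1 ≤ (-(2 • posRoot a b) - posRoot c d + weylRho n) k := by
  rw [neg_two_smul_sub_add_weylRho_apply]
  have := val_ne_or_val_ne_of_posRoot_ne hne
  have : (a : ℕ) < b := hab
  have : (c : ℕ) < d := hcd
  have := k.isLt; have := b.isLt; have := d.isLt
  split_ifs <;> omega

lemma neg_two_smul_sub_add_weylRho_le (hab : a < b) (hcd : c < d)
    (hne : posRoot a b ≠ posRoot c d) (k : Fin n) :
    (-(2 • posRoot a b) - posRoot c d + weylRho n) k ≤ n := by
  rw [neg_two_smul_sub_add_weylRho_apply]
  have := val_ne_or_val_ne_of_posRoot_ne hne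
  have : (a : ℕ) < b := hab
  have : (c : ℕ) < d := hcd
  have := k.isLt; have := b.isLt; have := d.isLt
  split_ifs <;> omega

lemma sum_neg_two_smul_sub_add_weylRho :
    ∑ k, (-(2 • posRoot a b) - posRoot c d + weylRho n) k = ∑ k, weylRho n k := by
  simp [Finset.sum_add_distrib, Finset.sum_sub_distrib, ← Finset.mul_sum, sum_posRoot]

/-- The value `n` can only sit at position `1` or `2`, and `-1` only at position `n - 2` or
`n - 3`, each with a prescribed shape of `α` and `β`; the four combinations leave only `n = 3`. -/
lemma eq_three_of_neg_two_smul_sub_add_weylRho (hab : a < b) (hcd : c < d)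
    (hne : posRoot a b ≠ posRoot c d) {p q : Fin n}
    (hp : (-(2 • posRoot a b) - posRoot c d + weylRho n) p = -1)
    (hq : (-(2 • posRoot a b) - posRoot c d + weylRho n) q = n) : n = 3 := by
  have := val_ne_or_val_ne_of_posRoot_ne hne
  rw [neg_two_smul_sub_add_weylRho_apply] at hp hq
  have : (a : ℕ) < b := hab
  have : (c : ℕ) < d := hcd
  have := p.isLt; have := q.isLt; have := b.isLt; have := d.isLt
  split_ifs at hp hq <;> omega

end ShiftedWeight

lemma isPosRoot_and_iff_of_forall_lt {n : ℕ} {R : (Fin n → ℤ) → Prop} {P Q : Fin n → ℤ}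
    (hP : IsPosRoot P) (hQ : IsPosRoot Q)
    (h : ∀ i j : Fin n, i < j → (R (posRoot i j) ↔ posRoot i j = P ∨ posRoot i j = Q))
    (x : Fin n → ℤ) : IsPosRoot x ∧ R x ↔ x = P ∨ x = Q := by
  constructor
  · rintro ⟨⟨i, j, hij, rfl⟩, hx⟩
    exact (h i j hij).1 hx
  · rintro (rfl | rfl)
    · obtain ⟨i, j, hij, rfl⟩ := hP
      exact ⟨⟨i, j, hij, rfl⟩, (h i j hij).2 (Or.inl rfl)⟩
    · obtain ⟨i, j, hij, rfl⟩ := hQ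
      exact ⟨⟨i, j, hij, rfl⟩, (h i j hij).2 (Or.inr rfl)⟩

instance {n : ℕ} (lam : Fin n → ℤ) : Decidable (IsDominant lam) :=
  inferInstanceAs (Decidable (∀ i j : Fin n, i ≤ j → lam j ≤ lam i))

instance {n : ℕ} (x : Fin n → ℤ) : Decidable (IsPosRoot x) :=
  inferInstanceAs (Decidable (∃ i j : Fin n, i < j ∧ x = posRoot i j))

instance {n : ℕ} (x : Fin n → ℤ) : Decidable (IsNegRoot x) :=
  inferInstanceAs (Decidable (∃ i j : Fin n, i < j ∧ x = -(posRoot i j)))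

set_option maxRecDepth 10000 in
lemma dot_neg_twoalpha_beta_structure_fin_three :
    ∀ (w : Equiv.Perm (Fin 3)) (a b c d : Fin 3), a < b → c < d → posRoot a b ≠ posRoot c d →
      IsDominant (dotAct w (-(2 • posRoot a b) - posRoot c d)) →
      dotAct w (-(2 • posRoot a b) - posRoot c d) ≠ 0 →
      wAct w (posRoot a b) = -(posRoot 0 2) ∧
      IsNegRoot (wAct w (posRoot c d)) ∧
      weylLen w = 2 ∧
      (∀ i j : Fin 3, i < j → (IsNegRoot (wAct w⁻¹ (posRoot i j)) ↔
        (posRoot i j = posRoot 0 2 ∨ posRoot i j = -(wAct w (posRoot c d))))) ∧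
      IsPosRoot (-(wAct w (posRoot c d))) ∧
      dotAct w (-(2 • posRoot a b) - posRoot c d) = posRoot 0 2 := by
  decide

/-- Structure of w when w·(−2α−β) is dominant and nonzero (α ≠ β positive roots):
w(α) = −α₀, w(β) is negative, ℓ(w) = 2, Φ_w = {α₀, −w(β)}, and w·(−2α−β) = α₀. -/
theorem dot_neg_twoalpha_beta_structure (n : ℕ) (hn : 3 ≤ n) (α β : Fin n → ℤ)
    (hα : IsPosRoot α) (hβ : IsPosRoot β) (hne : α ≠ β) (w : Equiv.Perm (Fin n))
    (hdom : IsDominant (dotAct w (-(2 • α) - β)))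
    (hnz : dotAct w (-(2 • α) - β) ≠ 0) :
    wAct w α = -(posRoot (⟨0, by omega⟩ : Fin n) (⟨n - 1, by omega⟩ : Fin n)) ∧
    IsNegRoot (wAct w β) ∧
    weylLen w = 2 ∧
    (∀ x : Fin n → ℤ, (IsPosRoot x ∧ IsNegRoot (wAct w⁻¹ x)) ↔
      (x = posRoot (⟨0, by omega⟩ : Fin n) (⟨n - 1, by omega⟩ : Fin n) ∨ x = -(wAct w β))) ∧
    dotAct w (-(2 • α) - β) = posRoot (⟨0, by omega⟩ : Fin n) (⟨n - 1, by omega⟩ : Fin n) := by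
  obtain ⟨a, b, hab, rfl⟩ := hα
  obtain ⟨c, d, hcd, rfl⟩ := hβ
  rw [dotAct_eq_wAct_sub] at hdom hnz
  have hattain := (eq_weylRho_or_exists_eq_neg_one_and_exists_eq hdom
    (fun i => neg_two_smul_sub_add_weylRho_le hab hcd hne _)
    (fun i => neg_one_le_neg_two_smul_sub_add_weylRho hab hcd hne _)
    ((sum_wAct _ _).trans sum_neg_two_smul_sub_add_weylRho)).resolve_left
    fun h => hnz (sub_eq_zero.2 h)
  obtain ⟨⟨p, hp⟩, q, hq⟩ := hattain
  obtain rfl : n = 3 := eq_three_of_neg_two_smul_sub_add_weylRho hab hcd hne hp hq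
  obtain ⟨hα', hβ', hlen, hinv, hβpos, hval⟩ :=
    dot_neg_twoalpha_beta_structure_fin_three w a b c d hab hcd hne hdom hnz
  exact ⟨hα', hβ', hlen, isPosRoot_and_iff_of_forall_lt ⟨0, 2, by decide, rfl⟩ hβpos hinv, hval⟩
end

section
/- Let n = 4 and let α, β, γ be positive roots of A_3 (repetitions allowed). If w ∈ S_4 is such that w·(−α−β−γ) = w(−α−β−γ+ρ) − ρ is dominant and nonzero, then α = β = γ = α_2 = e_2 − e_3, w·(−3α_2) = α_1+2α_2+α_3 = (1,1,−1,−1), and ℓ(w) = 3. -/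
set_option maxHeartbeats 4000000 in
instance inst_s11 {n : ℕ} (lam : Fin n → ℤ) : Decidable (IsDominant lam) := by
  unfold IsDominant; infer_instance

set_option maxHeartbeats 4000000 in
/-- For n = 4: if α, β, γ are positive roots of A₃ and w·(−α−β−γ) is dominant and
nonzero, then α = β = γ = α₂ = e₂ − e₃, w·(−3α₂) = (1,1,−1,−1), and ℓ(w) = 3. -/
theorem dot_neg_three_roots_A3 (α β γ : Fin 4 → ℤ)
    (hα : IsPosRoot α) (hβ : IsPosRoot β) (hγ : IsPosRoot γ) (w : Equiv.Perm (Fin 4))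
    (hdom : IsDominant (dotAct w (-α - β - γ)))
    (hnz : dotAct w (-α - β - γ) ≠ 0) :
    α = posRoot 1 2 ∧ β = posRoot 1 2 ∧ γ = posRoot 1 2 ∧
    dotAct w (-α - β - γ) = ![1, 1, -1, -1] ∧ weylLen w = 3 := by
  obtain ⟨i1, j1, h1, rfl⟩ := hα
  obtain ⟨i2, j2, h2, rfl⟩ := hβ
  obtain ⟨i3, j3, h3, rfl⟩ := hγ
  revert h1 h2 h3 hdom hnz
  revert w i1 j1 i2 j2 i3 j3
  decide
end
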